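/- Let N = p·q where p and q are distinct odd primes, let a be an integer coprime to N, and let r be the multiplicative order of a modulo N. If r is even and a^{r/2} ≢ −1 (mod N), then both gcd(a^{r/2} − 1, N) and gcd(a^{r/2} + 1, N) are nontrivial factors of N, i.e., each gcd is strictly greater than 1 and strictly less than N. -/
import Mathlib


/-- **Shor reduction.** Let `N = p * q` with `p`, `q` distinct odd primes, let `a` be an
integer coprime to `N`, and let `r` be the multiplicative order of `a` modulo `N`.
If `r` is even and `a ^ (r / 2) ≢ −1 (mod N)`, then both `gcd (a ^ (r/2) − 1) N` and
`gcd (a ^ (r/2) + 1) N` are nontrivial factors of `N`. -/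
theorem shor_gcd_nontrivial_factors
    (p q : ℕ) (hp : p.Prime) (hq : q.Prime) (hpq : p ≠ q)
    (hp_odd : Odd p) (hq_odd : Odd q)
    (N : ℕ) (hN : N = p * q)
    (a : ℤ) (ha : IsCoprime a (N : ℤ))
    (r : ℕ) (hr : r = orderOf ((a : ZMod N)))
    (hr_even : Even r)
    (hha : ((a : ZMod N)) ^ (r / 2) ≠ -1) :
    (1 < Int.gcd (a ^ (r / 2) - 1) N ∧ Int.gcd (a ^ (r / 2) - 1) N < N) ∧
    (1 < Int.gcd (a ^ (r / 2) + 1) N ∧ Int.gcd (a ^ (r / 2) + 1) N < N) := by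
  have hN1 : 1 < N := by
    have := hp.two_le; have := hq.two_le; subst hN; nlinarith
  haveI : NeZero N := ⟨by omega⟩
  -- a is a unit mod N
  have hu : IsUnit ((a : ZMod N)) := by
    have h := ha.map (Int.castRingHom (ZMod N))
    simp only [map_intCast, map_natCast, ZMod.natCast_self] at h
    exact isCoprime_zero_right.mp h
  have rpos : 0 < r := by
    rw [hr]
    have h1 : orderOf ((a : ZMod N)) = orderOf hu.unit := by
      rw [← orderOf_units, IsUnit.unit_spec]
    rw [h1]
    exact orderOf_pos hu.unit
  have h2r : 2 ∣ r := hr_even.two_dvd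
  have hhalf : r / 2 * 2 = r := Nat.div_mul_cancel h2r
  set x : ZMod N := (a : ZMod N) ^ (r / 2) with hx
  have hx2 : x * x = 1 := by
    rw [hx, ← pow_add]
    have : r / 2 + r / 2 = r := by omega
    rw [this, hr, pow_orderOf_eq_one]
  have hxne1 : x ≠ 1 := by
    intro h
    have : orderOf ((a : ZMod N)) ∣ r / 2 := orderOf_dvd_of_pow_eq_one h
    rw [← hr] at this
    have := Nat.le_of_dvd (by omega) this
    omega
  -- divisibility of product
  have hprod : (N : ℤ) ∣ (a ^ (r / 2) - 1) * (a ^ (r / 2) + 1) := by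
    rw [← ZMod.intCast_zmod_eq_zero_iff_dvd]
    push_cast
    rw [← hx]
    ring_nf
    rw [mul_comm] at hx2
    linear_combination hx2
  have hcast1 : ((a ^ (r / 2) - 1 : ℤ) : ZMod N) = x - 1 := by push_cast; rw [hx]
  have hcast2 : ((a ^ (r / 2) + 1 : ℤ) : ZMod N) = x + 1 := by push_cast; rw [hx]
  have hnd1 : ¬ (N : ℤ) ∣ (a ^ (r / 2) - 1) := by
    rw [← ZMod.intCast_zmod_eq_zero_iff_dvd, hcast1]
    intro h
    exact hxne1 (by linear_combination h)
  have hnd2 : ¬ (N : ℤ) ∣ (a ^ (r / 2) + 1) := by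
    rw [← ZMod.intCast_zmod_eq_zero_iff_dvd, hcast2]
    intro h
    exact hha (by linear_combination h)
  -- generic lemma application
  have key : ∀ y z : ℤ, (N : ℤ) ∣ y * z → ¬ (N : ℤ) ∣ y → ¬ (N : ℤ) ∣ z →
      1 < Int.gcd y N ∧ Int.gcd y N < N := by
    intro y z hyz hy hz
    have hdvdN : Int.gcd y N ∣ N := by
      have h := Int.gcd_dvd_right (a := y) (b := (N : ℤ))
      exact_mod_cast Int.ofNat_dvd.mp (by exact_mod_cast h)
    have hne0 : Int.gcd y N ≠ 0 := by
      intro h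
      rw [Int.gcd_eq_zero_iff] at h
      have h2 : (N : ℤ) = 0 := h.2
      have : N = 0 := by exact_mod_cast h2
      omega
    constructor
    · rcases Nat.lt_or_ge 1 (Int.gcd y N) with h | h
      · exact h
      · exfalso
        have h1 : Int.gcd y N = 1 := by omega
        have hc : IsCoprime y (N : ℤ) := Int.isCoprime_iff_gcd_eq_one.mpr h1
        exact hz (hc.symm.dvd_of_dvd_mul_left hyz)
    · have hle : Int.gcd y N ≤ N := Nat.le_of_dvd (by omega) hdvdN
      rcases eq_or_lt_of_le hle with h | h
      · exfalso
        apply hy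
        have := Int.gcd_dvd_left (a := y) (b := (N : ℤ))
        rwa [h] at this
      · exact h
  have hprod' : (N : ℤ) ∣ (a ^ (r / 2) + 1) * (a ^ (r / 2) - 1) := by
    rwa [mul_comm] at hprod
  exact ⟨key _ _ hprod hnd1 hnd2, key _ _ hprod' hnd2 hnd1⟩
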